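/- arXiv:cs/0601128 — 6 statements merged into one kernel-verified Lean document; each statement's English description precedes it below -/
import Mathlib

section
/- Let M : Fin (n+1) → EuclideanSpace ℝ (Fin 2) be a tame sequence and let δ be a positive integer such that for all indices 0 ≤ i < j < k ≤ n one has Area(M i, M j, M k) ≥ (j−i)(k−j)/(2δ) (i.e., δ ≥ Δ₃(M)). If ⌊n/δ⌋ ≥ 3, then the subsequence (M 0, M δ, M (2δ), …, M (⌊n/δ⌋·δ)) is a convex sequence. (Lemma 2.) -/
noncomputable def triArea {d : ℕ} (A B C : EuclideanSpace ℝ (Fin d)) : ℝ :=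
  (1 / 2) * Real.sqrt (‖B - A‖ ^ 2 * ‖C - A‖ ^ 2 - (inner ℝ (B - A) (C - A) : ℝ) ^ 2)

def Tame {d n : ℕ} (M : Fin (n + 1) → EuclideanSpace ℝ (Fin d)) : Prop :=
  ∀ i : Fin n, dist (M i.castSucc) (M i.succ) ≤ 1

/-- A finite cyclic sequence of points in the plane is convex: the points are pairwise
distinct and, for each edge `P i P (i+1)`, all the other points lie strictly on one and
the same open side of the line through `P i` and `P (i+1)`. -/
def ConvexSeq {m : ℕ} [NeZero m] (P : Fin m → EuclideanSpace ℝ (Fin 2)) : Prop :=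
  Function.Injective P ∧
    ∀ i j k : Fin m, j ≠ i → j ≠ i + 1 → k ≠ i → k ≠ i + 1 →
      (affineSpan ℝ {P i, P (i + 1)}).SSameSide (P j) (P k)

/-!
Write `T t` for twice the signed area of `M a, M b, M t`. One step of the tame path changes `T` by
at most `‖M b - M a‖`, so `T` keeps its sign along any stretch of indices where
`|T t| > ‖M b - M a‖ / 2`. The hypothesis `δ ≥ Δ₃` gives this for `t` at least `δ` outside `[a, b]`
(there `|T t| ≥ b - a ≥ ‖M b - M a‖`), and for the chord from `0` to `m δ` with `t ∈ [δ, (m - 1) δ]`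
(there `|T t| ≥ (m - 1) δ > m δ / 2`, as `m ≥ 3`). Moving the vertices of a sampled triangle
`M (x δ), M (y δ), M (z δ)` one at a time to `M 0, M δ, M (m δ)` therefore never changes its
orientation: all triangles of the sampled sequence are oriented alike, which makes it convex.
-/

open Module

theorem mul_pos_trans {α : Type*} [CommRing α] [LinearOrder α] [IsStrictOrderedRing α]
    {a b c : α} (hab : 0 < a * b) (hbc : 0 < b * c) : 0 < a * c := by
  have hb : b ≠ 0 := by rintro rfl; simp at hab
  refine pos_of_mul_pos_left (b := b * b) ?_ (mul_self_pos.2 hb).le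
  calc 0 < a * b * (b * c) := mul_pos hab hbc
    _ = a * c * (b * b) := by ring

theorem mul_pos_of_abs_sub_le {α : Type*} [CommRing α] [LinearOrder α] [IsStrictOrderedRing α]
    {a b L : α} (h : |b - a| ≤ L) (ha : L < 2 * |a|) (hb : L < 2 * |b|) : 0 < a * b := by
  rcases abs_cases a with ⟨ha', _⟩ | ⟨ha', _⟩ <;> rcases abs_cases b with ⟨hb', _⟩ | ⟨hb', _⟩ <;>
    rcases abs_cases (b - a) with ⟨hd, _⟩ | ⟨hd, _⟩ <;> nlinarith

theorem mul_pos_of_abs_sub_succ_le {α : Type*} [CommRing α] [LinearOrder α]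
    [IsStrictOrderedRing α] {f : ℕ → α} {L : α} {a b : ℕ} (hab : a ≤ b)
    (hstep : ∀ t, |f (t + 1) - f t| ≤ L) (hbig : ∀ t ∈ Set.Icc a b, L < 2 * |f t|) :
    0 < f a * f b := by
  induction b, hab using Nat.le_induction with
  | base =>
    have hL : 0 ≤ L := (abs_nonneg _).trans (hstep a)
    have ha : f a ≠ 0 := by
      intro h0
      have := hbig a ⟨le_rfl, le_rfl⟩
      rw [h0, abs_zero, mul_zero] at this
      exact this.not_ge hL
    exact mul_self_pos.2 ha
  | succ b hab ih =>
    exact mul_pos_trans (ih fun t ht => hbig t ⟨ht.1, ht.2.trans b.le_succ⟩)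
      (mul_pos_of_abs_sub_le (hstep b) (hbig b ⟨hab, b.le_succ⟩)
        (hbig (b + 1) ⟨hab.trans b.le_succ, le_rfl⟩))

theorem dist_le_of_dist_succ_le_one {α : Type*} [PseudoMetricSpace α] {p : ℕ → α}
    (hp : ∀ t, dist (p t) (p (t + 1)) ≤ 1) {a b : ℕ} (hab : a ≤ b) :
    dist (p a) (p b) ≤ (b : ℝ) - a :=
  calc dist (p a) (p b) ≤ ∑ _ ∈ Finset.Ico a b, (1 : ℝ) :=
        dist_le_Ico_sum_of_dist_le hab fun _ _ => hp _
    _ = (b : ℝ) - a := by simp [Nat.cast_sub hab]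

namespace Orientation

variable {E : Type*} [NormedAddCommGroup E] [InnerProductSpace ℝ E] [Fact (finrank ℝ E = 2)]
  (o : Orientation ℝ E (Fin 2))

/-- Twice the signed area of the triangle `p q r`. -/
noncomputable def turn (p q r : E) : ℝ := o.areaForm (q - p) (r - p)

theorem turn_neg_orientation (p q r : E) : (-o).turn p q r = -o.turn p q r := by
  simp [turn, areaForm_neg_orientation]

theorem turn_rotate (p q r : E) : o.turn q r p = o.turn p q r := by
  simp only [turn, map_sub, LinearMap.sub_apply, areaForm_apply_self, sub_zero]
  rw [o.areaForm_swap r p, o.areaForm_swap r q]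
  ring

theorem turn_swap (p q r : E) : o.turn p r q = -o.turn p q r := o.areaForm_swap _ _

theorem abs_turn_sub_turn_le (p q r r' : E) :
    |o.turn p q r - o.turn p q r'| ≤ ‖q - p‖ * dist r r' := by
  rw [turn, turn, ← map_sub, sub_sub_sub_cancel_right, dist_eq_norm]
  exact o.abs_areaForm_le _ _

theorem exists_smul_eq_of_areaForm_eq_zero {u w : E} (hu : u ≠ 0) (h : o.areaForm u w = 0) :
    ∃ r : ℝ, r • u = w := by
  rcases le_total 0 (inner ℝ u w) with hw | hw
  · obtain ⟨r, -, hr⟩ :=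
      ((o.nonneg_inner_and_areaForm_eq_zero_iff_sameRay u w).1 ⟨hw, h⟩).exists_nonneg_left hu
    exact ⟨r, hr⟩
  · obtain ⟨r, -, hr⟩ := ((o.nonneg_inner_and_areaForm_eq_zero_iff_sameRay u (-w)).1
      ⟨by simpa using hw, by simp [h]⟩).exists_nonneg_left hu
    exact ⟨-r, by rw [neg_smul, hr, neg_neg]⟩

theorem turn_eq_zero_of_mem_affineSpan_pair {p q x : E} (hx : x ∈ line[ℝ, p, q]) :
    o.turn p q x = 0 := by
  obtain ⟨r, rfl⟩ := mem_affineSpan_pair_iff_exists_lineMap_eq.1 hx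
  rw [turn, AffineMap.lineMap_apply_module', add_sub_cancel_right, map_smul,
    areaForm_apply_self, smul_zero]

theorem sSameSide_of_turn_mul_pos {p q x y : E} (h : 0 < o.turn p q x * o.turn p q y) :
    line[ℝ, p, q].SSameSide x y := by
  have hx : o.turn p q x ≠ 0 := by rintro h0; simp [h0] at h
  have hy : o.turn p q y ≠ 0 := by rintro h0; simp [h0] at h
  have hpq : q - p ≠ 0 := by rintro h0; simp [turn, h0] at hx
  rw [AffineSubspace.sSameSide_iff_exists_left (left_mem_affineSpan_pair ℝ p q)]
  refine ⟨fun hm => hx (o.turn_eq_zero_of_mem_affineSpan_pair hm),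
    fun hm => hy (o.turn_eq_zero_of_mem_affineSpan_pair hm), ?_⟩
  -- slide `y` parallel to `p q` onto the ray from `p` through `x`
  set c := o.turn p q y / o.turn p q x
  have hc : 0 < c := div_pos_iff.2 (mul_pos_iff.1 (by rwa [mul_comm] at h))
  refine ⟨y - c • (x - p), ?_, ?_⟩
  · obtain ⟨r, hr⟩ := o.exists_smul_eq_of_areaForm_eq_zero hpq (w := (y - p) - c • (x - p)) (by
      rw [map_sub, map_smul, smul_eq_mul]
      exact sub_eq_zero.2 (div_mul_cancel₀ _ hx).symm)
    refine mem_affineSpan_pair_iff_exists_lineMap_eq.2 ⟨r, ?_⟩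
    rw [AffineMap.lineMap_apply_module', hr]
    abel
  · rw [vsub_eq_sub, vsub_eq_sub, sub_sub_cancel]
    exact SameRay.sameRay_nonneg_smul_right _ hc.le

theorem turn_add_one_pos {m : ℕ} {q : Fin (m + 1) → E}
    (h : ∀ i j k, i < j → j < k → 0 < o.turn (q i) (q j) (q k)) {i j : Fin (m + 1)}
    (hji : j ≠ i) (hji' : j ≠ i + 1) : 0 < o.turn (q i) (q (i + 1)) (q j) := by
  by_cases hi : i = Fin.last m
  · subst hi
    rw [Fin.last_add_one] at hji' ⊢
    rw [← o.turn_rotate]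
    exact h 0 j _ (Fin.pos_iff_ne_zero.2 hji') (Fin.lt_last_iff_ne_last.2 hji)
  · have hval : ((i + 1 : Fin (m + 1)) : ℕ) = i + 1 := by rw [Fin.val_add_one, if_neg hi]
    rw [Ne, Fin.ext_iff] at hji hji'
    rcases lt_or_gt_of_ne hji with hlt | hgt
    · rw [o.turn_rotate]
      exact h j i (i + 1) hlt (Fin.lt_def.2 (by omega))
    · exact h i (i + 1) j (Fin.lt_def.2 (by omega)) (Fin.lt_def.2 (by omega))

variable {p : ℕ → E}

theorem turn_mul_pos_of_forall_mem_Icc (hp : ∀ t, dist (p t) (p (t + 1)) ≤ 1) (A B : E)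
    {a b : ℕ} (hab : a ≤ b) (hfar : ∀ t ∈ Set.Icc a b, ‖B - A‖ < 2 * |o.turn A B (p t)|) :
    0 < o.turn A B (p a) * o.turn A B (p b) := by
  refine mul_pos_of_abs_sub_succ_le hab (fun t => ?_) hfar
  calc |o.turn A B (p (t + 1)) - o.turn A B (p t)| ≤ ‖B - A‖ * dist (p (t + 1)) (p t) :=
        o.abs_turn_sub_turn_le _ _ _ _
    _ ≤ ‖B - A‖ := mul_le_of_le_one_right (norm_nonneg _) (dist_comm (p t) _ ▸ hp t)

/-- The hypothesis `δ ≥ Δ₃` of the paper, for the first `N + 1` terms of `p`. -/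
def AreaBounded (p : ℕ → E) (δ N : ℕ) : Prop :=
  ∀ ⦃s t u : ℕ⦄, s < t → t < u → u ≤ N →
    ((t : ℝ) - s) * ((u : ℝ) - t) / δ ≤ |o.turn (p s) (p t) (p u)|

namespace AreaBounded

variable {o} {δ N : ℕ} (hA : o.AreaBounded p δ N) (hp : ∀ t, dist (p t) (p (t + 1)) ≤ 1)
  (hδ : 0 < δ)
include hA hp hδ

theorem norm_sub_lt_of_add_le {a b t : ℕ} (hab : a < b) (hbt : b + δ ≤ t) (htN : t ≤ N) :
    ‖p b - p a‖ < 2 * |o.turn (p a) (p b) (p t)| := by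
  have hlen : ‖p b - p a‖ ≤ (b : ℝ) - a := by
    rw [← dist_eq_norm, dist_comm]; exact dist_le_of_dist_succ_le_one hp hab.le
  have harea := hA hab (by omega) htN
  have hδ' : (0 : ℝ) < δ := by exact_mod_cast hδ
  have hab' : (a : ℝ) < b := by exact_mod_cast hab
  have hbt' : (b : ℝ) + δ ≤ t := by exact_mod_cast hbt
  have : (b : ℝ) - a ≤ ((b : ℝ) - a) * ((t : ℝ) - b) / δ := by
    rw [le_div_iff₀ hδ']; nlinarith
  linarith

theorem norm_sub_lt_of_le_sub {a b t : ℕ} (hta : t + δ ≤ a) (hab : a < b) (hbN : b ≤ N) :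
    ‖p b - p a‖ < 2 * |o.turn (p a) (p b) (p t)| := by
  have hlen : ‖p b - p a‖ ≤ (b : ℝ) - a := by
    rw [← dist_eq_norm, dist_comm]; exact dist_le_of_dist_succ_le_one hp hab.le
  have harea := hA (by omega : t < a) hab hbN
  rw [← o.turn_rotate] at harea
  have hδ' : (0 : ℝ) < δ := by exact_mod_cast hδ
  have hab' : (a : ℝ) < b := by exact_mod_cast hab
  have hta' : (t : ℝ) + δ ≤ a := by exact_mod_cast hta
  have : (b : ℝ) - a ≤ ((a : ℝ) - t) * ((b : ℝ) - a) / δ := by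
    rw [le_div_iff₀ hδ']; nlinarith
  linarith

theorem norm_sub_lt_of_mem_Icc {a c t : ℕ} (hat : a + δ ≤ t) (htc : t + δ ≤ c)
    (hac : a + 2 * δ < c) (hcN : c ≤ N) :
    ‖p c - p a‖ < 2 * |o.turn (p a) (p c) (p t)| := by
  have hlen : ‖p c - p a‖ ≤ (c : ℝ) - a := by
    rw [← dist_eq_norm, dist_comm]; exact dist_le_of_dist_succ_le_one hp (by omega)
  have harea := hA (by omega : a < t) (by omega : t < c) hcN
  rw [o.turn_swap, abs_neg] at harea
  have hδ' : (0 : ℝ) < δ := by exact_mod_cast hδ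
  have hat' : (a : ℝ) + δ ≤ t := by exact_mod_cast hat
  have htc' : (t : ℝ) + δ ≤ c := by exact_mod_cast htc
  have hac' : (a : ℝ) + 2 * δ < c := by exact_mod_cast hac
  -- `(t - a) (c - t) ≥ δ (c - a - δ)` as soon as both factors are at least `δ`
  have : (c : ℝ) - a - δ ≤ ((t : ℝ) - a) * ((c : ℝ) - t) / δ := by
    rw [le_div_iff₀ hδ']; nlinarith [mul_nonneg (sub_nonneg.2 hat') (sub_nonneg.2 htc')]
  linarith

theorem turn_mul_turn_pos {m : ℕ} (hm : 3 ≤ m) (hmN : m * δ ≤ N) {x y z : ℕ} (hxy : x < y)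
    (hyz : y < z) (hzm : z ≤ m) :
    0 < o.turn (p 0) (p δ) (p (m * δ)) * o.turn (p (x * δ)) (p (y * δ)) (p (z * δ)) := by
  have gap : ∀ {i j : ℕ}, i < j → i * δ + δ ≤ j * δ := fun h =>
    (Nat.succ_mul _ _).symm.le.trans (Nat.mul_le_mul_right δ h)
  have hxy' := gap hxy
  have hyz' := gap hyz
  have hzm' := Nat.mul_le_mul_right δ hzm
  have hmove_z : 0 < o.turn (p (x * δ)) (p (y * δ)) (p (z * δ)) *
      o.turn (p (x * δ)) (p (y * δ)) (p (m * δ)) :=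
    o.turn_mul_pos_of_forall_mem_Icc hp _ _ hzm' fun t ⟨ht₁, ht₂⟩ =>
      hA.norm_sub_lt_of_add_le hp hδ (by omega) (by omega) (by omega)
  have hmove_x : 0 < o.turn (p 0) (p (y * δ)) (p (m * δ)) *
      o.turn (p (x * δ)) (p (y * δ)) (p (m * δ)) := by
    have h := o.turn_mul_pos_of_forall_mem_Icc hp (p (y * δ)) (p (m * δ)) (Nat.zero_le (x * δ))
      fun t ⟨_, ht⟩ => hA.norm_sub_lt_of_le_sub hp hδ (by omega) (by omega) hmN
    rwa [o.turn_rotate (p 0), o.turn_rotate (p (x * δ))] at h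
  have hmove_y : 0 < o.turn (p 0) (p δ) (p (m * δ)) * o.turn (p 0) (p (y * δ)) (p (m * δ)) := by
    have h := o.turn_mul_pos_of_forall_mem_Icc hp (p 0) (p (m * δ)) (a := δ) (b := y * δ)
      (by simpa using gap (by omega : 0 < y)) fun t ⟨ht₁, ht₂⟩ =>
        hA.norm_sub_lt_of_mem_Icc hp hδ (by omega) (by omega) (by nlinarith) hmN
    rwa [o.turn_swap (p 0) (p δ), o.turn_swap (p 0) (p (y * δ)), neg_mul_neg] at h
  rw [mul_comm] at hmove_z
  exact mul_pos_trans (mul_pos_trans hmove_y hmove_x) hmove_z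

theorem exists_orientation_turn_pos {m : ℕ} (hm : 3 ≤ m) (hmN : m * δ ≤ N) :
    ∃ o' : Orientation ℝ E (Fin 2), ∀ x y z : ℕ, x < y → y < z → z ≤ m →
      0 < o'.turn (p (x * δ)) (p (y * δ)) (p (z * δ)) := by
  rcases lt_or_ge 0 (o.turn (p 0) (p δ) (p (m * δ))) with hσ | hσ
  · exact ⟨o, fun x y z hxy hyz hzm =>
      pos_of_mul_pos_right (hA.turn_mul_turn_pos hp hδ hm hmN hxy hyz hzm) hσ.le⟩
  · refine ⟨-o, fun x y z hxy hyz hzm => ?_⟩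
    rw [turn_neg_orientation, neg_pos]
    exact neg_of_mul_pos_right (hA.turn_mul_turn_pos hp hδ hm hmN hxy hyz hzm) hσ

end AreaBounded

end Orientation

open scoped EuclideanSpace

theorem triArea_eq_abs_turn (o : Orientation ℝ (EuclideanSpace ℝ (Fin 2)) (Fin 2))
    (A B C : EuclideanSpace ℝ (Fin 2)) : triArea A B C = |o.turn A B C| / 2 := by
  rw [triArea, ← o.inner_sq_add_areaForm_sq, add_sub_cancel_left, Real.sqrt_sq_eq_abs,
    Orientation.turn]
  ring

theorem convexSeq_of_turn_pos {m : ℕ} (hm : 2 ≤ m)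
    (o : Orientation ℝ (EuclideanSpace ℝ (Fin 2)) (Fin 2))
    {q : Fin (m + 1) → EuclideanSpace ℝ (Fin 2)}
    (h : ∀ i j k, i < j → j < k → 0 < o.turn (q i) (q j) (q k)) : ConvexSeq q := by
  have eq_add_one_of_eq : ∀ {i j}, q i = q j → j ≠ i → j = i + 1 := fun hq hne => by
    by_contra hne'
    have := o.turn_add_one_pos h hne hne'
    rw [← hq, Orientation.turn, sub_self, map_zero] at this
    exact lt_irrefl 0 this
  refine ⟨fun i j hq => ?_, fun i j k hji hji' hki hki' =>
    o.sSameSide_of_turn_mul_pos (mul_pos (o.turn_add_one_pos h hji hji')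
      (o.turn_add_one_pos h hki hki'))⟩
  by_contra hij
  have hj := eq_add_one_of_eq hq (Ne.symm hij)
  have hi := eq_add_one_of_eq hq.symm hij
  rw [hj, add_assoc, left_eq_add] at hi
  simp [Fin.ext_iff, Fin.val_add_one, Nat.mod_eq_of_lt (by omega : 1 < m + 1)] at hi
  omega

theorem Tame.dist_clamp_succ_le_one {d n : ℕ} {M : Fin (n + 1) → EuclideanSpace ℝ (Fin d)}
    (hM : Tame M) (t : ℕ) : dist (M (Fin.clamp t n)) (M (Fin.clamp (t + 1) n)) ≤ 1 := by
  rcases lt_or_ge t n with ht | ht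
  · convert hM ⟨t, ht⟩ using 3 <;> ext <;> simp <;> omega
  · rw [Fin.clamp_eq_last _ _ ht, Fin.clamp_eq_last _ _ (by omega), dist_self]
    exact zero_le_one

theorem stmt_5 (n : ℕ) (M : Fin (n + 1) → EuclideanSpace ℝ (Fin 2)) (hM : Tame M)
    (δ : ℕ) (hδ : 0 < δ)
    (harea : ∀ i j k : Fin (n + 1), i < j → j < k →
      triArea (M i) (M j) (M k) ≥
        (((j : ℕ) : ℝ) - ((i : ℕ) : ℝ)) * (((k : ℕ) : ℝ) - ((j : ℕ) : ℝ)) / (2 * (δ : ℝ)))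
    (hn : 3 ≤ n / δ) :
    ConvexSeq (fun i : Fin (n / δ + 1) =>
      M ⟨(i : ℕ) * δ, by
        have h1 : (i : ℕ) ≤ n / δ := Nat.lt_succ_iff.mp i.isLt
        have h2 : (i : ℕ) * δ ≤ (n / δ) * δ := Nat.mul_le_mul_right δ h1
        have h3 : (n / δ) * δ ≤ n := Nat.div_mul_le_self n δ
        omega⟩) := by
  set p : ℕ → EuclideanSpace ℝ (Fin 2) := fun t => M (Fin.clamp t n)
  have hpM : ∀ t (ht : t < n + 1), p t = M ⟨t, ht⟩ := fun t ht =>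
    congrArg M (Fin.ext (min_eq_left (Nat.lt_succ_iff.1 ht)))
  set o := (EuclideanSpace.basisFun (Fin 2) ℝ).toBasis.orientation
  have hA : o.AreaBounded p δ n := fun s t u hst htu hun => by
    have h := harea ⟨s, by omega⟩ ⟨t, by omega⟩ ⟨u, by omega⟩ hst htu
    rw [triArea_eq_abs_turn o, ← hpM, ← hpM, ← hpM, ge_iff_le, mul_comm 2, ← div_div,
      div_le_div_iff_of_pos_right two_pos] at h
    exact h
  obtain ⟨o', ho'⟩ := hA.exists_orientation_turn_pos hM.dist_clamp_succ_le_one hδ hn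
    (Nat.div_mul_le_self n δ)
  refine convexSeq_of_turn_pos (by omega) o' fun i j k hij hjk => ?_
  convert ho' i j k hij hjk (Nat.lt_succ_iff.1 k.isLt) using 2 <;> exact (hpM _ _).symm
end

section
/- Let M : Fin (n+1) → EuclideanSpace ℝ (Fin 2) be a tame sequence and let δ ≥ 1 be a real number such that for all indices 0 ≤ i < j < k ≤ n one has Area(M i, M j, M k) ≥ (j−i)(k−j)/(2δ). Then for all indices i < j and all k with j + δ ≤ k and k + 1 ≤ n, the points M k and M (k+1) lie strictly on the same side of the affine line through M i and M j (i.e., (affineSpan ℝ {M i, M j}).SSameSide (M k) (M (k+1))). (Second claim in the proof of Lemma 2.) -/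
open Module RealInnerProductSpace

theorem mul_pos_of_lt_abs_of_abs_sub_le {a b c : ℝ} (hb : c < |b|) (hab : |a - b| ≤ c) :
    0 < a * b := by
  by_contra! h
  have hsum : |a - b| = |a| + |b| := by
    rw [sub_eq_add_neg, ← abs_neg b, abs_add_eq_add_abs_iff]
    rcases mul_nonpos_iff.1 h with ⟨h₁, h₂⟩ | ⟨h₁, h₂⟩
    · exact Or.inl ⟨h₁, neg_nonneg.2 h₂⟩
    · exact Or.inr ⟨h₁, neg_nonpos.2 h₂⟩
  linarith [abs_nonneg a]

theorem Tame.dist_le {d n : ℕ} {M : Fin (n + 1) → EuclideanSpace ℝ (Fin d)} (hM : Tame M)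
    {i j : Fin (n + 1)} (hij : i ≤ j) : dist (M i) (M j) ≤ (j : ℝ) - i := by
  have hclamp {k : ℕ} (hk : k ≤ n) : Fin.clamp k n = ⟨k, by omega⟩ := Fin.ext (min_eq_left hk)
  have key := dist_le_Ico_sum_of_dist_le (f := fun k => M (Fin.clamp k n)) (d := fun _ => 1)
    (Fin.le_def.1 hij) fun {k} _ hk => by
      have hkn : k < n := by omega
      rw [hclamp hkn.le, hclamp hkn]
      exact hM ⟨k, hkn⟩
  simpa [hclamp (Nat.le_of_lt_succ i.2), hclamp (Nat.le_of_lt_succ j.2),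
    Nat.cast_sub (Fin.le_def.1 hij)] using key

namespace Orientation

variable {E : Type*} [NormedAddCommGroup E] [InnerProductSpace ℝ E] [Fact (finrank ℝ E = 2)]
  (o : Orientation ℝ E (Fin 2))

local notation "ω" => o.areaForm
local notation "J" => o.rightAngleRotation

theorem norm_sq_smul_eq_inner_smul_add_areaForm_smul (u w : E) :
    ‖u‖ ^ 2 • w = ⟪u, w⟫ • u + ω u w • J u := by
  refine ext_inner_right ℝ fun v => ?_
  simp only [inner_smul_left, inner_add_left, inner_rightAngleRotation_left, RCLike.conj_to_real]
  linarith [o.inner_mul_inner_add_areaForm_mul_areaForm u w v]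

theorem mem_affineSpan_pair_iff_areaForm_eq_zero {A B : E} (hAB : A ≠ B) (P : E) :
    P ∈ affineSpan ℝ {A, B} ↔ ω (B - A) (P - A) = 0 := by
  rw [← vsub_vadd P A, vadd_left_mem_affineSpan_pair, vsub_vadd, vsub_eq_sub, vsub_eq_sub]
  constructor
  · rintro ⟨r, hr⟩
    rw [← hr, map_smul, areaForm_apply_self, smul_zero]
  · intro h
    have hu : ‖B - A‖ ^ 2 ≠ 0 := by simpa [sub_eq_zero] using hAB.symm
    refine ⟨⟪B - A, P - A⟫ / ‖B - A‖ ^ 2, ?_⟩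
    rw [div_eq_inv_mul, mul_smul, ← add_zero (_ • (B - A)), ← zero_smul ℝ (J (B - A)), ← h,
      ← o.norm_sq_smul_eq_inner_smul_add_areaForm_smul, inv_smul_smul₀ hu]

theorem sSameSide_affineSpan_pair_of_areaForm_mul_pos {A B x y : E}
    (h : 0 < ω (B - A) (x - A) * ω (B - A) (y - A)) :
    (affineSpan ℝ {A, B}).SSameSide x y := by
  have hAB : A ≠ B := by
    rintro rfl
    simp at h
  set a := ω (B - A) (x - A)
  set b := ω (B - A) (y - A)
  have ha : a ≠ 0 := left_ne_zero_of_mul h.ne'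
  have ht : 0 < b / a := by
    rw [← mul_div_mul_left b a ha, ← sq]
    positivity
  have hx : x ∉ affineSpan ℝ {A, B} := mt (o.mem_affineSpan_pair_iff_areaForm_eq_zero hAB x).1 ha
  have hp : y - (b / a) • (x - A) ∈ affineSpan ℝ {A, B} := by
    rw [o.mem_affineSpan_pair_iff_areaForm_eq_zero hAB, sub_right_comm, map_sub, map_smul,
      smul_eq_mul, div_mul_cancel₀ b ha, sub_self]
  simpa using
    AffineSubspace.sSameSide_smul_vsub_vadd_right hx (left_mem_affineSpan_pair ℝ A B) hp ht

theorem sSameSide_affineSpan_pair_of_norm_lt_abs_areaForm {A B x y : E}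
    (hy : ‖B - A‖ < |ω (B - A) (y - A)|) (hxy : dist x y ≤ 1) :
    (affineSpan ℝ {A, B}).SSameSide x y := by
  refine o.sSameSide_affineSpan_pair_of_areaForm_mul_pos (mul_pos_of_lt_abs_of_abs_sub_le hy ?_)
  calc |ω (B - A) (x - A) - ω (B - A) (y - A)| = |ω (B - A) (x - y)| := by
        rw [← map_sub, sub_sub_sub_cancel_right]
    _ ≤ ‖B - A‖ * ‖x - y‖ := o.abs_areaForm_le _ _
    _ ≤ ‖B - A‖ := mul_le_of_le_one_right (norm_nonneg _) (by rwa [← dist_eq_norm])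

end Orientation

theorem triArea_eq_abs_areaForm_div_two [Fact (finrank ℝ (EuclideanSpace ℝ (Fin 2)) = 2)]
    (o : Orientation ℝ (EuclideanSpace ℝ (Fin 2)) (Fin 2)) (A B C : EuclideanSpace ℝ (Fin 2)) :
    triArea A B C = |o.areaForm (B - A) (C - A)| / 2 := by
  rw [triArea, ← o.inner_sq_add_areaForm_sq, add_sub_cancel_left, Real.sqrt_sq_eq_abs]
  ring

theorem stmt_7 (n : ℕ) (M : Fin (n + 1) → EuclideanSpace ℝ (Fin 2)) (hM : Tame M)
    (δ : ℝ) (hδ : 1 ≤ δ)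
    (harea : ∀ i j k : Fin (n + 1), i < j → j < k →
      triArea (M i) (M j) (M k) ≥
        (((j : ℕ) : ℝ) - ((i : ℕ) : ℝ)) * (((k : ℕ) : ℝ) - ((j : ℕ) : ℝ)) / (2 * δ)) :
    ∀ (i j : Fin (n + 1)) (k : ℕ) (hk : ((j : ℕ) : ℝ) + δ ≤ (k : ℝ)) (hkn : k + 1 ≤ n),
      i < j →
      (affineSpan ℝ {M i, M j}).SSameSide (M ⟨k, by omega⟩) (M ⟨k + 1, by omega⟩) := by
  intro i j k hk hkn hij
  have : Fact (finrank ℝ (EuclideanSpace ℝ (Fin 2)) = 2) := ⟨finrank_euclideanSpace_fin⟩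
  let o := (EuclideanSpace.basisFun (Fin 2) ℝ).toBasis.orientation
  have hδ0 : 0 < δ := by linarith
  have hji : (0 : ℝ) < (j : ℝ) - i := sub_pos.2 (by exact_mod_cast hij)
  have hjk : (j : ℕ) < k + 1 := by exact_mod_cast (show (j : ℝ) < k + 1 by linarith)
  have harea' := harea i j ⟨k + 1, by omega⟩ hij hjk
  rw [triArea_eq_abs_areaForm_div_two o, mul_comm 2 δ, ← div_div] at harea'
  refine o.sSameSide_affineSpan_pair_of_norm_lt_abs_areaForm ?_ (hM ⟨k, by omega⟩)
  calc ‖M j - M i‖ ≤ (j : ℝ) - i := by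
        rw [← dist_eq_norm, dist_comm]
        exact hM.dist_le hij.le
    _ < ((j : ℝ) - i) * ((k + 1 : ℕ) - j) / δ := by
      rw [lt_div_iff₀ hδ0]
      exact mul_lt_mul_of_pos_left (by push_cast; linarith) hji
    _ ≤ _ := by linarith
end

section
/- Let d ≥ 2, let n be a natural number, and let 0 ≤ i < j < k ≤ n be indices. Then there exists a non-expanding embedding g : Fin (n+1) → EuclideanSpace ℝ (Fin d) (i.e., dist(g p, g q) ≤ |p − q| for all p, q) such that Area(g i, g j, g k) = (j−i)(k−j)/2. (Attainment half of the identity ρ₃(i,j,k) = (j−i)(k−j)/2, realized by an L-shaped configuration with a right angle at g j.) -/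
/-!
The points of `Π_n` are sent along an L-shaped path: first along a unit vector `u` up to
the corner `j`, then along a unit vector `v ⟂ u`. This is non-expanding by the triangle
inequality alone, because the displacements along `u` and along `v` between two parameters
have the same sign and add up to their difference. Orthogonality is needed only for the area:
the triangle `g i, g j, g k` has a right angle at the corner, with legs `j - i` and `k - j`.
-/

section LPath

variable {E : Type*} [NormedAddCommGroup E] [NormedSpace ℝ E]

def lPath (u v : E) (c t : ℝ) : E := min t c • u + max t c • v

theorem abs_min_sub_min_add_abs_max_sub_max (s t c : ℝ) :
    |min s c - min t c| + |max s c - max t c| = |s - t| := by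
  grind [abs_eq_max_neg]

theorem dist_lPath_le {u v : E} (hu : ‖u‖ ≤ 1) (hv : ‖v‖ ≤ 1) (c s t : ℝ) :
    dist (lPath u v c s) (lPath u v c t) ≤ |s - t| :=
  calc dist (lPath u v c s) (lPath u v c t)
      = ‖(min s c - min t c) • u + (max s c - max t c) • v‖ := by
        rw [dist_eq_norm, lPath, lPath, sub_smul, sub_smul]
        abel_nf
    _ ≤ ‖(min s c - min t c) • u‖ + ‖(max s c - max t c) • v‖ := norm_add_le _ _
    _ ≤ |min s c - min t c| + |max s c - max t c| := by
        gcongr <;> rw [norm_smul, Real.norm_eq_abs] <;>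
          exact mul_le_of_le_one_right (abs_nonneg _) ‹_›
    _ = |s - t| := abs_min_sub_min_add_abs_max_sub_max s t c

theorem lPath_sub_lPath_of_le {u v : E} {c s t : ℝ} (hs : s ≤ c) (ht : t ≤ c) :
    lPath u v c t - lPath u v c s = (t - s) • u := by
  simp only [lPath, min_eq_left hs, min_eq_left ht, max_eq_right hs, max_eq_right ht, sub_smul]
  abel

theorem lPath_sub_lPath_of_ge {u v : E} {c s t : ℝ} (hs : c ≤ s) (ht : c ≤ t) :
    lPath u v c t - lPath u v c s = (t - s) • v := by
  simp only [lPath, min_eq_right hs, min_eq_right ht, max_eq_left hs, max_eq_left ht, sub_smul]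
  abel

end LPath

theorem triArea_eq_of_inner_eq_zero {d : ℕ} {A B C : EuclideanSpace ℝ (Fin d)}
    (h : inner ℝ (B - A) (C - B) = 0) : triArea A B C = ‖B - A‖ * ‖C - B‖ / 2 := by
  have hCA : C - A = (B - A) + (C - B) := by abel
  have hinner : inner ℝ (B - A) (C - A) = ‖B - A‖ ^ 2 := by
    rw [hCA, inner_add_right, h, add_zero, real_inner_self_eq_norm_sq]
  have hnorm : ‖C - A‖ ^ 2 = ‖B - A‖ ^ 2 + ‖C - B‖ ^ 2 := by
    simpa only [hCA, sq] using norm_add_sq_eq_norm_sq_add_norm_sq_real h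
  rw [triArea, hinner, hnorm,
    show ‖B - A‖ ^ 2 * (‖B - A‖ ^ 2 + ‖C - B‖ ^ 2) - (‖B - A‖ ^ 2) ^ 2
      = (‖B - A‖ * ‖C - B‖) ^ 2 by ring,
    Real.sqrt_sq (by positivity)]
  ring

theorem stmt_9 (d : ℕ) (hd : 2 ≤ d) (n : ℕ) (i j k : Fin (n + 1))
    (hij : i < j) (hjk : j < k) :
    ∃ g : Fin (n + 1) → EuclideanSpace ℝ (Fin d),
      (∀ p q : Fin (n + 1), dist (g p) (g q) ≤ |((p : ℕ) : ℝ) - ((q : ℕ) : ℝ)|) ∧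
      triArea (g i) (g j) (g k) =
        (((j : ℕ) : ℝ) - ((i : ℕ) : ℝ)) * (((k : ℕ) : ℝ) - ((j : ℕ) : ℝ)) / 2 := by
  have he := (EuclideanSpace.basisFun (Fin d) ℝ).orthonormal
  set u := EuclideanSpace.basisFun (Fin d) ℝ ⟨0, by omega⟩
  set v := EuclideanSpace.basisFun (Fin d) ℝ ⟨1, by omega⟩
  have huv : inner ℝ u v = 0 := he.2 (by simp [Fin.ext_iff])
  have hIJ : ((i : ℕ) : ℝ) ≤ (j : ℕ) := by exact_mod_cast hij.le
  have hJK : ((j : ℕ) : ℝ) ≤ (k : ℕ) := by exact_mod_cast hjk.le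
  have hji : lPath u v (j : ℕ) (j : ℕ) - lPath u v (j : ℕ) (i : ℕ) = ((j : ℕ) - (i : ℕ) : ℝ) • u :=
    lPath_sub_lPath_of_le hIJ le_rfl
  have hkj : lPath u v (j : ℕ) (k : ℕ) - lPath u v (j : ℕ) (j : ℕ) = ((k : ℕ) - (j : ℕ) : ℝ) • v :=
    lPath_sub_lPath_of_ge le_rfl hJK
  refine ⟨fun p ↦ lPath u v (j : ℕ) (p : ℕ),
    fun p q ↦ dist_lPath_le (he.1 _).le (he.1 _).le _ _ _, ?_⟩
  rw [triArea_eq_of_inner_eq_zero, hji, hkj, norm_smul, norm_smul, he.1, he.1,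
    Real.norm_of_nonneg (sub_nonneg.2 hIJ), Real.norm_of_nonneg (sub_nonneg.2 hJK)]
  · ring
  · rw [hji, hkj, inner_smul_left, inner_smul_right, huv, mul_zero, mul_zero]
end

section
/- For every tame sequence M : Fin 4 → EuclideanSpace ℝ (Fin 2) (that is, any embedding of the path Π₃ of length 3), there exist indices 0 ≤ i < j < k ≤ 3 with Area(M i, M j, M k) ≤ (√3/4)·(j−i)(k−j). (The 3-distortion δ₃(Π₃, ℝ²) is at least 2/√3.) -/
/-!
Write `u = M 1 - M 0` and `v = M 2 - M 1`, two vectors of length at most one. If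
`dist (M 0) (M 2) ≤ √3`, the triangle `M 0, M 2, M 3` has area at most `√3 / 2`, since its two
sides at `M 2` have lengths at most `√3` and `1`. Otherwise `‖u + v‖² > 3` forces `⟪u, v⟫ ≥ 1/2`,
and the triangle `M 0, M 1, M 2` has area `½ √(‖u‖²‖v‖² - ⟪u, v⟫²) ≤ ½ √(1 - 1/4) = √3 / 4`.
-/

open RealInnerProductSpace

section TriArea

variable {d : ℕ} (A B C : EuclideanSpace ℝ (Fin d))

theorem triArea_eq_of_consecutive_sides :
    triArea A B C = 1 / 2 * √(‖B - A‖ ^ 2 * ‖C - B‖ ^ 2 - ⟪B - A, C - B⟫ ^ 2) := by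
  have hCA : C - A = (B - A) + (C - B) := by abel
  rw [triArea, hCA, norm_add_sq_real, inner_add_right, real_inner_self_eq_norm_sq]
  ring_nf

theorem triArea_le_dist_mul_dist : triArea A B C ≤ dist A B * dist B C / 2 := by
  have hsqrt : √(‖B - A‖ ^ 2 * ‖C - B‖ ^ 2 - ⟪B - A, C - B⟫ ^ 2) ≤ ‖B - A‖ * ‖C - B‖ := by
    rw [Real.sqrt_le_left (by positivity)]
    nlinarith [sq_nonneg ⟪B - A, C - B⟫]
  rw [triArea_eq_of_consecutive_sides, dist_comm A B, dist_comm B C, dist_eq_norm, dist_eq_norm]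
  linarith

variable {A B C}

theorem triArea_le_of_dist_le_one_of_sqrt_three_le_dist (hAB : dist A B ≤ 1) (hBC : dist B C ≤ 1)
    (hAC : √3 ≤ dist A C) : triArea A B C ≤ √3 / 4 := by
  rw [dist_comm, dist_eq_norm] at hAB hBC hAC
  have hsum : C - A = (B - A) + (C - B) := by abel
  have hAC_sq : 3 ≤ ‖C - A‖ ^ 2 := by
    simpa [Real.sq_sqrt] using pow_le_pow_left₀ (Real.sqrt_nonneg 3) hAC 2
  have hinner : 1 / 2 ≤ ⟪B - A, C - B⟫ := by
    rw [hsum, norm_add_sq_real] at hAC_sq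
    nlinarith [norm_nonneg (B - A), norm_nonneg (C - B)]
  have hgram : ‖B - A‖ ^ 2 * ‖C - B‖ ^ 2 - ⟪B - A, C - B⟫ ^ 2 ≤ 3 / 4 := by
    have hu : ‖B - A‖ ^ 2 ≤ 1 := by nlinarith [norm_nonneg (B - A)]
    have hv : ‖C - B‖ ^ 2 ≤ 1 := by nlinarith [norm_nonneg (C - B)]
    nlinarith [mul_le_mul hu hv (sq_nonneg _) zero_le_one]
  calc triArea A B C ≤ 1 / 2 * √(3 / 4) := by
        rw [triArea_eq_of_consecutive_sides]
        gcongr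
    _ = √3 / 4 := by
        rw [Real.sqrt_div' _ (by norm_num : (0 : ℝ) ≤ 4),
          show (4 : ℝ) = 2 ^ 2 by norm_num, Real.sqrt_sq (by norm_num)]
        ring

end TriArea

theorem stmt_10 (M : Fin 4 → EuclideanSpace ℝ (Fin 2)) (hM : Tame M) :
    ∃ i j k : Fin 4, i < j ∧ j < k ∧
      triArea (M i) (M j) (M k) ≤
        (Real.sqrt 3 / 4) * ((((j : ℕ) : ℝ) - ((i : ℕ) : ℝ)) * (((k : ℕ) : ℝ) - ((j : ℕ) : ℝ))) := by
  rcases le_total (dist (M 0) (M 2)) √3 with hnear | hfar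
  · refine ⟨0, 2, 3, by decide, by decide, ?_⟩
    have h23 : dist (M 2) (M 3) ≤ 1 := hM 2
    calc triArea (M 0) (M 2) (M 3) ≤ dist (M 0) (M 2) * dist (M 2) (M 3) / 2 :=
          triArea_le_dist_mul_dist _ _ _
      _ ≤ √3 * 1 / 2 := by gcongr
      _ = √3 / 4 * ((2 - 0) * (3 - 2)) := by ring
      _ = _ := by norm_num
  · refine ⟨0, 1, 2, by decide, by decide, ?_⟩
    calc triArea (M 0) (M 1) (M 2) ≤ √3 / 4 :=
          triArea_le_of_dist_le_one_of_sqrt_three_le_dist (hM 0) (hM 1) hfar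
      _ = _ := by norm_num
end

section
/- There exists a constant C > 0 such that for every natural number m ≥ 1 there is a tame sequence M : Fin (m+1) → EuclideanSpace ℝ (Fin 2), all of whose points lie on a common circle with dist(M i, M (i+1)) = 1 for every i < m, satisfying Area(M i, M j, M k) ≥ (j−i)(k−j)/(2·C·m) for all indices 0 ≤ i < j < k ≤ m. (When m+1 points lie at consecutive distance 1 on a suitable arc of circle, the 3-distortion is O(m); this is the planar case d = 2 of Proposition 2.) -/
open Real

lemma sin_add_sin_sub_sin_add (x y : ℝ) :
    sin x + sin y - sin (x + y) = 4 * sin (x / 2) * sin (y / 2) * sin ((x + y) / 2) := by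
  obtain ⟨a, b, rfl, rfl⟩ : ∃ a b : ℝ, x = 2 * a ∧ y = 2 * b := ⟨x / 2, y / 2, by ring, by ring⟩
  rw [show 2 * a + 2 * b = 2 * (a + b) by ring]
  simp only [mul_div_cancel_left₀ _ (two_ne_zero' ℝ), sin_two_mul, sin_add, cos_add]
  linear_combination (-2 * sin a * cos a) * sin_sq_add_cos_sq b +
    (-2 * sin b * cos b) * sin_sq_add_cos_sq a

lemma triArea_eq_abs_cross (A B C : EuclideanSpace ℝ (Fin 2)) :
    triArea A B C = |(B - A) 0 * (C - A) 1 - (B - A) 1 * (C - A) 0| / 2 := by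
  have gram : ∀ u v : EuclideanSpace ℝ (Fin 2),
      ‖u‖ ^ 2 * ‖v‖ ^ 2 - inner ℝ u v ^ 2 = (u 0 * v 1 - u 1 * v 0) ^ 2 := by
    intro u v
    simp only [EuclideanSpace.norm_sq_eq, PiLp.inner_apply, Fin.sum_univ_two, Real.norm_eq_abs,
      sq_abs, RCLike.inner_apply, conj_trivial]
    ring
  rw [triArea, gram, sqrt_sq_eq_abs]
  ring

noncomputable def circlePoint (R t : ℝ) : EuclideanSpace ℝ (Fin 2) := !₂[R * cos t, R * sin t]

lemma dist_circlePoint_zero (R t : ℝ) : dist (circlePoint R t) 0 = |R| := by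
  rw [dist_zero_right, EuclideanSpace.norm_eq, Fin.sum_univ_two]
  simp only [circlePoint, Real.norm_eq_abs, sq_abs, Matrix.cons_val_zero, Matrix.cons_val_one]
  rw [← sqrt_sq_eq_abs]
  congr 1
  linear_combination R ^ 2 * sin_sq_add_cos_sq t

lemma dist_circlePoint (R s t : ℝ) :
    dist (circlePoint R s) (circlePoint R t) = 2 * |R * sin ((t - s) / 2)| := by
  obtain ⟨c, h, rfl, rfl⟩ : ∃ c h : ℝ, s = c - h ∧ t = c + h :=
    ⟨(s + t) / 2, (t - s) / 2, by ring, by ring⟩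
  rw [EuclideanSpace.dist_eq, Fin.sum_univ_two]
  simp only [circlePoint, Real.dist_eq, sq_abs, Matrix.cons_val_zero, Matrix.cons_val_one]
  rw [show (c + h - (c - h)) / 2 = h by ring, ← abs_two, ← abs_mul, ← sqrt_sq_eq_abs]
  congr 1
  simp only [sin_add, sin_sub, cos_add, cos_sub]
  linear_combination (4 * R ^ 2 * sin h ^ 2) * sin_sq_add_cos_sq c

lemma triArea_circlePoint (R α β γ : ℝ) :
    triArea (circlePoint R α) (circlePoint R β) (circlePoint R γ) =
      2 * R ^ 2 * |sin ((β - α) / 2) * sin ((γ - β) / 2) * sin ((γ - α) / 2)| := by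
  have cross : (cos β - cos α) * (sin γ - sin α) - (sin β - sin α) * (cos γ - cos α) =
      sin (β - α) + sin (γ - β) - sin (β - α + (γ - β)) := by
    rw [show β - α + (γ - β) = γ - α by ring, sin_sub, sin_sub, sin_sub]
    ring
  rw [sin_add_sin_sub_sin_add, show β - α + (γ - β) = γ - α by ring] at cross
  rw [triArea_eq_abs_cross]
  simp only [circlePoint, PiLp.sub_apply, Matrix.cons_val_zero, Matrix.cons_val_one]
  rw [show (R * cos β - R * cos α) * (R * sin γ - R * sin α) -
      (R * sin β - R * sin α) * (R * cos γ - R * cos α) = R ^ 2 * 4 *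
        (sin ((β - α) / 2) * sin ((γ - β) / 2) * sin ((γ - α) / 2)) by
      linear_combination R ^ 2 * cross,
    abs_mul, abs_of_nonneg (by positivity : 0 ≤ R ^ 2 * 4)]
  ring

lemma div_le_sin_pi_mul_div {x m : ℝ} (hx : 0 ≤ x) (hxm : x ≤ m) :
    x / m ≤ sin (π * x / (2 * m)) := by
  rcases (hx.trans hxm).eq_or_lt with rfl | hm
  · simp
  have h := mul_le_sin (x := π * x / (2 * m)) (by positivity) (by
    rw [div_le_div_iff₀ (by positivity) two_pos]
    nlinarith [pi_pos])
  convert h using 1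
  field_simp

noncomputable def arcRadius (m : ℕ) : ℝ := 1 / (2 * sin (π / (2 * m)))

noncomputable def arcPoint (m i : ℕ) : EuclideanSpace ℝ (Fin 2) :=
  circlePoint (arcRadius m) (π * i / m)

lemma sin_pi_div_two_mul_pos {m : ℕ} (hm : 0 < m) : 0 < sin (π / (2 * m)) := by
  have : (1 : ℝ) ≤ m := by exact_mod_cast hm
  apply sin_pos_of_pos_of_lt_pi (by positivity)
  rw [div_lt_iff₀ (by positivity)]
  nlinarith [pi_pos]

lemma arcRadius_pos {m : ℕ} (hm : 0 < m) : 0 < arcRadius m := by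
  have := sin_pi_div_two_mul_pos hm
  unfold arcRadius
  positivity

lemma two_mul_arcRadius_mul_sin {m : ℕ} (hm : 0 < m) :
    2 * arcRadius m * sin (π / (2 * m)) = 1 := by
  have := sin_pi_div_two_mul_pos hm
  unfold arcRadius
  field_simp

lemma div_pi_le_arcRadius {m : ℕ} (hm : 0 < m) : m / π ≤ arcRadius m := by
  have hs := sin_pi_div_two_mul_pos hm
  have hle := sin_le (x := π / (2 * m)) (by positivity)
  unfold arcRadius
  rw [div_le_div_iff₀ pi_pos (by positivity)]
  have hm' : (0 : ℝ) < m := by exact_mod_cast hm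
  calc (m : ℝ) * (2 * sin (π / (2 * m))) ≤ m * (2 * (π / (2 * m))) := by gcongr
    _ = 1 * π := by field_simp

lemma dist_arcPoint_zero {m : ℕ} (hm : 0 < m) (i : ℕ) :
    dist (arcPoint m i) 0 = arcRadius m := by
  rw [arcPoint, dist_circlePoint_zero, abs_of_pos (arcRadius_pos hm)]

lemma dist_arcPoint_succ {m : ℕ} (hm : 0 < m) (i : ℕ) :
    dist (arcPoint m i) (arcPoint m (i + 1)) = 1 := by
  rw [arcPoint, arcPoint, dist_circlePoint, Nat.cast_succ,
    show (π * (i + 1) / m - π * i / m) / 2 = π / (2 * m) by ring,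
    abs_of_pos (mul_pos (arcRadius_pos hm) (sin_pi_div_two_mul_pos hm)), ← mul_assoc,
    two_mul_arcRadius_mul_sin hm]

lemma le_triArea_arcPoint {m i j k : ℕ} (hij : i < j) (hjk : j < k) (hkm : k ≤ m) :
    ((j : ℝ) - i) * ((k : ℝ) - j) / (π * m) ≤
      triArea (arcPoint m i) (arcPoint m j) (arcPoint m k) := by
  have hm : 0 < m := by omega
  have hm' : (0 : ℝ) < m := by exact_mod_cast hm
  have hij' : (i : ℝ) + 1 ≤ j := by exact_mod_cast hij
  have hjk' : (j : ℝ) + 1 ≤ k := by exact_mod_cast hjk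
  have hkm' : (k : ℝ) ≤ m := by exact_mod_cast hkm
  set R := arcRadius m
  have ha : 0 ≤ ((j : ℝ) - i) / m := div_nonneg (by linarith) hm'.le
  have hb : 0 ≤ ((k : ℝ) - j) / m := div_nonneg (by linarith) hm'.le
  have h₁ : ((j : ℝ) - i) / m ≤ sin (π * (j - i) / (2 * m)) :=
    div_le_sin_pi_mul_div (by linarith) (by linarith)
  have h₂ : ((k : ℝ) - j) / m ≤ sin (π * (k - j) / (2 * m)) :=
    div_le_sin_pi_mul_div (by linarith) (by linarith)
  have h₃ : sin (π / (2 * m)) ≤ sin (π * (k - i) / (2 * m)) := by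
    have hθ : 0 ≤ π / (2 * m) := by positivity
    apply sin_le_sin_of_le_of_le_pi_div_two (by linarith [pi_pos])
    · rw [div_le_div_iff₀ (by positivity) two_pos]
      nlinarith [pi_pos]
    · rw [← mul_one π, mul_assoc, one_mul]
      gcongr
      linarith
  have hs := sin_pi_div_two_mul_pos hm
  calc ((j : ℝ) - i) * ((k : ℝ) - j) / (π * m) = m / π * ((j - i) / m * ((k - j) / m)) := by
        field_simp
    _ ≤ R * ((j - i) / m * ((k - j) / m)) := by
        gcongr
        exact div_pi_le_arcRadius hm
    _ = 2 * R ^ 2 * ((j - i) / m * ((k - j) / m) * sin (π / (2 * m))) := by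
        linear_combination
          (-(R * ((j - i) / m * ((k - j) / m)))) * two_mul_arcRadius_mul_sin hm
    _ ≤ 2 * R ^ 2 * (sin (π * (j - i) / (2 * m)) * sin (π * (k - j) / (2 * m)) *
          sin (π * (k - i) / (2 * m))) := by
        gcongr
        exacts [mul_nonneg (ha.trans h₁) (hb.trans h₂), ha.trans h₁]
    _ ≤ triArea (arcPoint m i) (arcPoint m j) (arcPoint m k) := by
        rw [arcPoint, arcPoint, arcPoint, triArea_circlePoint,
          show (π * j / m - π * i / m) / 2 = π * (j - i) / (2 * m) by ring,
          show (π * k / m - π * j / m) / 2 = π * (k - j) / (2 * m) by ring,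
          show (π * k / m - π * i / m) / 2 = π * (k - i) / (2 * m) by ring]
        gcongr
        exact le_abs_self _

theorem stmt_12 :
    ∃ C : ℝ, 0 < C ∧
      ∀ m : ℕ, 1 ≤ m →
        ∃ M : Fin (m + 1) → EuclideanSpace ℝ (Fin 2), Tame M ∧
          (∃ (O : EuclideanSpace ℝ (Fin 2)) (R : ℝ), ∀ i : Fin (m + 1), dist (M i) O = R) ∧
          (∀ i : Fin m, dist (M i.castSucc) (M i.succ) = 1) ∧
          ∀ i j k : Fin (m + 1), i < j → j < k →
            triArea (M i) (M j) (M k) ≥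
              (((j : ℕ) : ℝ) - ((i : ℕ) : ℝ)) * (((k : ℕ) : ℝ) - ((j : ℕ) : ℝ)) /
                (2 * C * (m : ℝ)) := by
  refine ⟨π / 2, by positivity, fun m hm => ?_⟩
  have unit_steps : ∀ i : Fin m, dist (arcPoint m i.castSucc) (arcPoint m i.succ) = 1 :=
    fun i => by rw [Fin.val_succ, Fin.val_castSucc]; exact dist_arcPoint_succ hm i
  refine ⟨fun i => arcPoint m i, fun i => (unit_steps i).le,
    ⟨0, arcRadius m, fun i => dist_arcPoint_zero hm i⟩, unit_steps, fun i j k hij hjk => ?_⟩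
  rw [ge_iff_le, show 2 * (π / 2) * (m : ℝ) = π * m by ring]
  exact le_triArea_arcPoint hij hjk (Nat.lt_succ_iff.mp k.isLt)
end

section
/- Let O be a point of EuclideanSpace ℝ (Fin 2), let R > 0, and let A, B, C be three pairwise distinct points on the circle of center O and radius R (dist(A,O) = dist(B,O) = dist(C,O) = R). Then Area(A,B,C) ≤ dist(A,B) · dist(B,C) · (dist(A,B) + dist(B,C)) / (4R). In particular, if dist(A,B) ≤ ℓ and dist(B,C) ≤ ℓ, then Area(A,B,C) ≤ dist(A,B)·dist(B,C)·ℓ/(2R), so the 3-distortion of the triangle ABC is at least R/ℓ. (Flattening claim underlying the remark that points taken on a fixed C² curve of minimal osculating radius r_Γ yield 3-distortion Ω(n): by the inscribed angle theorem, sin ∠ABC = dist(A,C)/(2R) ≤ (dist(A,B)+dist(B,C))/(2R).) -/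
/-!
Write the area with the angle at `B`: `Area = ½ · AB · BC · sin ∠ABC`. By the inscribed angle
theorem (law of sines with the circumradius), `sin ∠ABC = AC / (2R)`, so `Area = AB · BC · AC / (4R)`,
and the triangle inequality `AC ≤ AB + BC ≤ 2ℓ` gives both bounds.
-/

open EuclideanGeometry Module

theorem triArea_eq_half_mul_dist_mul_dist_mul_sin_angle {d : ℕ}
    (A B C : EuclideanSpace ℝ (Fin d)) :
    triArea A B C = 1 / 2 * dist A B * dist B C * Real.sin (∠ A B C) := by
  have hA : Real.sin (∠ B A C) * (dist A B * dist A C) =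
      √(‖B - A‖ ^ 2 * ‖C - A‖ ^ 2 - inner ℝ (B - A) (C - A) ^ 2) := by
    rw [dist_eq_norm', dist_eq_norm', sq (inner ℝ _ _), ← real_inner_self_eq_norm_sq,
      ← real_inner_self_eq_norm_sq]
    exact InnerProductGeometry.sin_angle_mul_norm_mul_norm (B - A) (C - A)
  have hsin := sin_angle_mul_dist_eq_sin_angle_mul_dist A B C
  rw [angle_comm C A B, dist_comm C A] at hsin
  rw [triArea, ← hA]
  linear_combination (-1 / 2 * dist A B) * hsin

namespace EuclideanGeometry.Sphere

variable {V P : Type*} [NormedAddCommGroup V] [InnerProductSpace ℝ V] [MetricSpace P]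
  [NormedAddTorsor V P] [Fact (finrank ℝ V = 2)]

theorem sin_angle_eq_dist_div_two_mul_radius {s : Sphere P} {p₁ p₂ p₃ : P} (hp₁ : p₁ ∈ s)
    (hp₂ : p₂ ∈ s) (hp₃ : p₃ ∈ s) (hp₁p₂ : p₁ ≠ p₂) (hp₁p₃ : p₁ ≠ p₃) (hp₂p₃ : p₂ ≠ p₃) :
    Real.sin (∠ p₁ p₂ p₃) = dist p₁ p₃ / (2 * s.radius) := by
  have := FiniteDimensional.of_fact_finrank_eq_two (K := ℝ) (V := V)
  -- Any orientation will do: the unoriented statement does not depend on it.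
  have : Module.Oriented ℝ V (Fin 2) :=
    ⟨Basis.orientation (finBasisOfFinrankEq _ _ (Fact.out : finrank ℝ V = 2))⟩
  have hsin : |Real.Angle.sin (∡ p₁ p₂ p₃)| = Real.sin (∠ p₁ p₂ p₃) := by
    rw [← Real.Angle.sin_toReal,
      Real.abs_sin_eq_sin_abs_of_abs_le_pi (Real.Angle.abs_toReal_le_pi _),
      ← angle_eq_abs_oangle_toReal hp₁p₂ hp₂p₃.symm]
  have hr : s.radius ≠ 0 := by
    rintro h
    rw [mem_sphere, h, dist_eq_zero] at hp₁ hp₂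
    exact hp₁p₂ (hp₁.trans hp₂.symm)
  have hlaw_sines := dist_div_sin_oangle_eq_two_mul_radius hp₁ hp₂ hp₃ hp₁p₂ hp₁p₃ hp₂p₃
  rw [hsin] at hlaw_sines
  have hs : Real.sin (∠ p₁ p₂ p₃) ≠ 0 := by
    rintro h
    rw [h, div_zero] at hlaw_sines
    exact hr (by linarith)
  rw [eq_div_iff (mul_ne_zero two_ne_zero hr), ← hlaw_sines]
  field_simp

end EuclideanGeometry.Sphere

theorem triArea_eq_dist_mul_dist_mul_dist_div_four_mul_radius
    {O A B C : EuclideanSpace ℝ (Fin 2)} {R : ℝ} (hAB : A ≠ B) (hBC : B ≠ C) (hAC : A ≠ C)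
    (hA : dist A O = R) (hB : dist B O = R) (hC : dist C O = R) :
    triArea A B C = dist A B * dist B C * dist A C / (4 * R) := by
  have : Fact (finrank ℝ (EuclideanSpace ℝ (Fin 2)) = 2) := ⟨finrank_euclideanSpace_fin⟩
  let s : Sphere (EuclideanSpace ℝ (Fin 2)) := ⟨O, R⟩
  rw [triArea_eq_half_mul_dist_mul_dist_mul_sin_angle,
    Sphere.sin_angle_eq_dist_div_two_mul_radius (s := s) hA hB hC hAB hAC hBC]
  ring

theorem stmt_13 (O : EuclideanSpace ℝ (Fin 2)) (R : ℝ) (hR : 0 < R)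
    (A B C : EuclideanSpace ℝ (Fin 2)) (hAB : A ≠ B) (hBC : B ≠ C) (hAC : A ≠ C)
    (hA : dist A O = R) (hB : dist B O = R) (hC : dist C O = R) :
    triArea A B C ≤ dist A B * dist B C * (dist A B + dist B C) / (4 * R) ∧
      ∀ ℓ : ℝ, dist A B ≤ ℓ → dist B C ≤ ℓ →
        triArea A B C ≤ dist A B * dist B C * ℓ / (2 * R) := by
  have hAC_le_add := dist_triangle A B C
  have hbound : triArea A B C ≤ dist A B * dist B C * (dist A B + dist B C) / (4 * R) := by
    rw [triArea_eq_dist_mul_dist_mul_dist_div_four_mul_radius hAB hBC hAC hA hB hC]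
    gcongr
  refine ⟨hbound, fun ℓ hABℓ hBCℓ => hbound.trans ?_⟩
  calc _ ≤ dist A B * dist B C * (ℓ + ℓ) / (4 * R) := by gcongr
    _ = dist A B * dist B C * ℓ / (2 * R) := by ring
end
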